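/- Let R be a Noetherian ring with identity and let f : F₁ → F₂ and h : F₃ → F₂ be injective homomorphisms of finitely generated projective R-modules such that F₂/im(f), F₂/im(h), and F₂/(im(f) + im(h)) are all projective. Then im(f)/(im(f) ∩ im(h)) and im(h)/(im(f) ∩ im(h)) are projective, and F₂ admits an internal direct sum decomposition F₂ = (im(f) ∩ im(h)) ⊕ G ⊕ K ⊕ H with im(f) = (im(f) ∩ im(h)) ⊕ G and im(h) = (im(f) ∩ im(h)) ⊕ K. -/

import Mathlib

/-!
A surjection onto a projective module splits, so a submodule with projective quotient is a
direct summand. For `A = im f` and `B = im h`, the module `B / (A ∩ B) ≅ (A + B) / A` is the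
kernel of the split surjection `F₂ / A → F₂ / (A + B)` of projective modules, hence projective;
symmetrically for `A / (A ∩ B)`. Complements `G` of `A ∩ B` in `A`, `K` of `A ∩ B` in `B` and
`H` of `A + B` in `F₂` give the decomposition, because `A ∩ K = A ∩ B ∩ K = 0` and
`A + K = A + B`.
-/

theorem iSupIndep_fin_four_of_disjoint {α : Type*} [CompleteLattice α] [IsModularLattice α]
    {a b c d : α} (hab : Disjoint a b) (habc : Disjoint (a ⊔ b) c)
    (habcd : Disjoint (a ⊔ b ⊔ c) d) : iSupIndep ![a, b, c, d] := by
  rw [iSupIndep_iff_supIndep_univ,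
    show (Finset.univ : Finset (Fin 4)) = {3, 2, 1, 0} by decide]
  refine .insert (.insert (.insert (Finset.supIndep_singleton _ _) ?_) ?_) ?_
  · simpa using hab.symm
  · simpa [sup_comm] using habc.symm
  · simpa [sup_comm, sup_left_comm] using habcd.symm

theorem iSup_fin_four {α : Type*} [CompleteLattice α] (a b c d : α) :
    ⨆ i, ![a, b, c, d] i = a ⊔ b ⊔ c ⊔ d := by
  rw [← Finset.sup_univ_eq_iSup, show (Finset.univ : Finset (Fin 4)) = {0, 1, 2, 3} by decide]
  simp [sup_assoc]

namespace Submodule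

variable {R M : Type*} [Ring R] [AddCommGroup M] [Module R M] {A B : Submodule R M}

theorem isInternal_fin_four_of_disjoint {a b c d : Submodule R M} (hab : Disjoint a b)
    (habc : Disjoint (a ⊔ b) c) (habcd : IsCompl (a ⊔ b ⊔ c) d) :
    DirectSum.IsInternal ![a, b, c, d] :=
  (DirectSum.isInternal_submodule_iff_iSupIndep_and_iSup_eq_top _).2
    ⟨iSupIndep_fin_four_of_disjoint hab habc habcd.disjoint,
      (iSup_fin_four a b c d).trans habcd.codisjoint.eq_top⟩

theorem exists_isCompl_of_projective_quotient (p : Submodule R M)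
    [Module.Projective R (M ⧸ p)] : ∃ q, IsCompl p q := by
  obtain ⟨σ, hσ⟩ := p.mkQ.exists_rightInverse_of_surjective p.range_mkQ
  have hidem : IsIdempotentElem (σ ∘ₗ p.mkQ) := by
    rw [IsIdempotentElem, Module.End.mul_eq_comp, LinearMap.comp_assoc,
      ← LinearMap.comp_assoc p.mkQ, hσ, LinearMap.id_comp]
  have hker : LinearMap.ker (σ ∘ₗ p.mkQ) = p := by
    rw [LinearMap.ker_comp, LinearMap.ker_eq_bot_of_inverse hσ]
    exact p.ker_mkQ
  exact ⟨_, hker ▸ (LinearMap.IsIdempotentElem.isCompl hidem).symm⟩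

theorem projective_of_projective_quotient [Module.Projective R M] (p : Submodule R M)
    [Module.Projective R (M ⧸ p)] : Module.Projective R p := by
  obtain ⟨q, hpq⟩ := p.exists_isCompl_of_projective_quotient
  exact .of_split p.subtype (p.projectionOnto q hpq) (p.projectionOnto_comp_subtype hpq)

theorem projective_quotient_comap_inf [Module.Projective R (M ⧸ A)]
    [Module.Projective R (M ⧸ (A ⊔ B))] :
    Module.Projective R (B ⧸ (A ⊓ B).comap B.subtype) := by
  have : Module.Projective R ((M ⧸ A) ⧸ B.map A.mkQ) :=
    .of_equiv (quotientQuotientEquivQuotientSup A B).symm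
  have := (B.map A.mkQ).projective_of_projective_quotient
  let φ := A.mkQ ∘ₗ B.subtype
  have hker : LinearMap.ker φ = (A ⊓ B).comap B.subtype := by
    simp [φ, LinearMap.ker_comp, comap_inf]
  have hrange : LinearMap.range φ = B.map A.mkQ := by
    rw [LinearMap.range_comp, range_subtype]
  exact .of_equiv ((quotEquivOfEq _ _ hker.symm).trans
    (φ.quotKerEquivRange.trans (LinearEquiv.ofEq _ _ hrange))).symm

theorem exists_disjoint_sup_eq_of_projective_quotient_comap (hAB : A ≤ B)
    [Module.Projective R (B ⧸ A.comap B.subtype)] :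
    ∃ C ≤ B, Disjoint A C ∧ A ⊔ C = B := by
  obtain ⟨C, hC⟩ := (A.comap B.subtype).exists_isCompl_of_projective_quotient
  have hA : (A.comap B.subtype).map B.subtype = A := by
    rw [map_comap_subtype, inf_eq_right.2 hAB]
  refine ⟨C.map B.subtype, map_subtype_le _ _, ?_, ?_⟩
  · rw [← hA]
    exact disjoint_map B.injective_subtype hC.disjoint
  · rw [← hA, ← map_sup, hC.sup_eq_top, map_top, range_subtype]

end Submodule

theorem stmt_15_general {R : Type*} [Ring R]
    {F₁ F₂ F₃ : Type*} [AddCommGroup F₁] [Module R F₁] [AddCommGroup F₂] [Module R F₂]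
    [AddCommGroup F₃] [Module R F₃]
    (f : F₁ →ₗ[R] F₂) (h : F₃ →ₗ[R] F₂)
    (hcoker₁ : Module.Projective R (F₂ ⧸ LinearMap.range f))
    (hcoker₂ : Module.Projective R (F₂ ⧸ LinearMap.range h))
    (hcoker₃ : Module.Projective R (F₂ ⧸ (LinearMap.range f ⊔ LinearMap.range h))) :
    Module.Projective R (↥(LinearMap.range f) ⧸
      ((LinearMap.range f ⊓ LinearMap.range h).comap (LinearMap.range f).subtype)) ∧
    Module.Projective R (↥(LinearMap.range h) ⧸
      ((LinearMap.range f ⊓ LinearMap.range h).comap (LinearMap.range h).subtype)) ∧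
    ∃ G K H : Submodule R F₂,
      DirectSum.IsInternal ![LinearMap.range f ⊓ LinearMap.range h, G, K, H] ∧
      LinearMap.range f = (LinearMap.range f ⊓ LinearMap.range h) ⊔ G ∧
      LinearMap.range h = (LinearMap.range f ⊓ LinearMap.range h) ⊔ K := by
  set A := LinearMap.range f
  set B := LinearMap.range h
  have hA : Module.Projective R (A ⧸ (A ⊓ B).comap A.subtype) := by
    have : Module.Projective R (F₂ ⧸ (B ⊔ A)) := sup_comm A B ▸ hcoker₃
    exact inf_comm B A ▸ Submodule.projective_quotient_comap_inf
  have hB : Module.Projective R (B ⧸ (A ⊓ B).comap B.subtype) :=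
    Submodule.projective_quotient_comap_inf
  obtain ⟨G, -, hIG, hAG⟩ := Submodule.exists_disjoint_sup_eq_of_projective_quotient_comap
    (inf_le_left : A ⊓ B ≤ A)
  obtain ⟨K, hKB, hIK, hBK⟩ := Submodule.exists_disjoint_sup_eq_of_projective_quotient_comap
    (inf_le_right : A ⊓ B ≤ B)
  obtain ⟨H, hH⟩ := (A ⊔ B).exists_isCompl_of_projective_quotient
  have hAK : Disjoint A K := by
    rw [disjoint_iff, ← inf_eq_right.2 hKB, ← inf_assoc]
    exact hIK.eq_bot
  have hAKB : A ⊔ K = A ⊔ B := by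
    rw [← hBK, ← sup_assoc, sup_inf_self]
  refine ⟨hA, hB, G, K, H, Submodule.isInternal_fin_four_of_disjoint hIG ?_ ?_, hAG.symm, hBK.symm⟩
  · rwa [hAG]
  · rwa [hAG, hAKB]

/-- Case 2 of the A₃ decomposition: two injections f, h into F₂ with the
relevant cokernels projective.  The subquotients im f/(im f ∩ im h) and
im h/(im f ∩ im h) are projective and F₂ = (im f ∩ im h) ⊕ G ⊕ K ⊕ H with
im f = (im f ∩ im h) ⊕ G and im h = (im f ∩ im h) ⊕ K. -/
theorem stmt_15 {R : Type*} [Ring R] [IsNoetherianRing R]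
    {F₁ F₂ F₃ : Type*} [AddCommGroup F₁] [Module R F₁] [AddCommGroup F₂] [Module R F₂]
    [AddCommGroup F₃] [Module R F₃]
    [Module.Finite R F₁] [Module.Finite R F₂] [Module.Finite R F₃]
    [Module.Projective R F₁] [Module.Projective R F₂] [Module.Projective R F₃]
    (f : F₁ →ₗ[R] F₂) (h : F₃ →ₗ[R] F₂)
    (hf : Function.Injective f) (hh : Function.Injective h)
    (hcoker₁ : Module.Projective R (F₂ ⧸ LinearMap.range f))
    (hcoker₂ : Module.Projective R (F₂ ⧸ LinearMap.range h))
    (hcoker₃ : Module.Projective R (F₂ ⧸ (LinearMap.range f ⊔ LinearMap.range h))) :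
    Module.Projective R (↥(LinearMap.range f) ⧸
      ((LinearMap.range f ⊓ LinearMap.range h).comap (LinearMap.range f).subtype)) ∧
    Module.Projective R (↥(LinearMap.range h) ⧸
      ((LinearMap.range f ⊓ LinearMap.range h).comap (LinearMap.range h).subtype)) ∧
    ∃ G K H : Submodule R F₂,
      DirectSum.IsInternal ![LinearMap.range f ⊓ LinearMap.range h, G, K, H] ∧
      LinearMap.range f = (LinearMap.range f ⊓ LinearMap.range h) ⊔ G ∧
      LinearMap.range h = (LinearMap.range f ⊓ LinearMap.range h) ⊔ K :=
  stmt_15_general f h hcoker₁ hcoker₂ hcoker₃
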